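/- arXiv:2003.07715 — 2 statements merged into one kernel-verified Lean document; each statement's English description precedes it below -/
import Mathlib

section
/- If 0 < 2q < ω and z̄ : (−∞, 0] → ℝ solves z̄' = φ(1 + √(1 − 2q(1 − z̄)/ω)) z̄ with z̄(0) = 1, where φ ≥ 0 is continuous, then z̄ is nondecreasing on (−∞, 0] and 0 ≤ z̄(ξ) ≤ 1 for all ξ ≤ 0. -/
/-!
Freezing the solution inside the nonlinearity, `z̄` solves the linear equation `z̄' = a z̄` with the
continuous coefficient `a(ξ) = φ(1 + √(1 - 2q(1 - z̄ ξ)/ω)) ≥ 0`, so the integrating factor gives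
`z̄ ξ = exp (∫₀^ξ a) > 0`. Then `z̄' = a z̄ ≥ 0`, and monotonicity together with `z̄ 0 = 1` gives the
upper bound.
-/

open Real Set

theorem eq_mul_exp_integral_of_hasDerivAt_mul {a z : ℝ → ℝ} {t₀ t₁ : ℝ} (ha : Continuous a)
    (hz : ∀ t ∈ uIcc t₀ t₁, HasDerivAt z (a t * z t) t) :
    z t₁ = z t₀ * exp (∫ s in t₀..t₁, a s) := by
  set A : ℝ → ℝ := fun t => ∫ s in t₀..t, a s
  have hA : ∀ t, HasDerivAt A (a t) t := fun t =>
    intervalIntegral.integral_hasDerivAt_right (ha.intervalIntegrable _ _)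
      (ha.stronglyMeasurableAtFilter _ _) ha.continuousAt
  have hw : ∀ t ∈ uIcc t₀ t₁, HasDerivWithinAt (fun t => z t * exp (-A t)) 0 (uIcc t₀ t₁) t :=
    fun t ht => (((hz t ht).mul (hA t).neg.exp).congr_deriv (by ring)).hasDerivWithinAt
  have hconst := convex_uIcc t₀ t₁ |>.norm_image_sub_le_of_norm_hasDerivWithin_le hw
    (fun _ _ => norm_zero.le) left_mem_uIcc right_mem_uIcc
  have hA₀ : A t₀ = 0 := intervalIntegral.integral_same
  rw [zero_mul, norm_le_zero_iff, sub_eq_zero, hA₀, neg_zero, exp_zero, mul_one, exp_neg,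
    ← div_eq_mul_inv, div_eq_iff (exp_pos _).ne'] at hconst
  exact hconst

theorem majda_profile_z_monotone_bounded_general
    (ω q : ℝ)
    (φ : ℝ → ℝ) (hφ : Continuous φ) (hφpos : ∀ v, 0 ≤ φ v)
    (z : ℝ → ℝ)
    (hODE : ∀ ξ ≤ (0:ℝ),
      HasDerivAt z (φ (1 + Real.sqrt (1 - 2*q*(1 - z ξ)/ω)) * z ξ) ξ)
    (hz0 : z 0 = 1) :
    MonotoneOn z (Set.Iic 0) ∧ ∀ ξ ≤ (0:ℝ), 0 ≤ z ξ ∧ z ξ ≤ 1 := by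
  have hzc : ContinuousOn z (Iic 0) := fun ξ hξ => (hODE ξ hξ).continuousAt.continuousWithinAt
  -- `z` is only known to be continuous on `Iic 0`; clamping at `0` makes `a` continuous on `ℝ`.
  set a : ℝ → ℝ := fun t => φ (1 + √(1 - 2*q*(1 - z (min t 0))/ω))
  have ha : Continuous a := by
    have : Continuous fun t : ℝ => z (min t 0) :=
      hzc.comp_continuous (by fun_prop) fun t => min_le_right t 0
    exact hφ.comp <| continuous_const.add <|
      (continuous_const.sub ((continuous_const.mul (continuous_const.sub this)).div_const ω)).sqrt
  have hpos : ∀ ξ ≤ (0:ℝ), 0 < z ξ := by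
    intro ξ hξ
    have hlin : ∀ t ∈ uIcc 0 ξ, HasDerivAt z (a t * z t) t := fun t ht => by
      have ht0 : t ≤ 0 := ht.2.trans (max_le le_rfl hξ)
      simpa only [a, min_eq_left ht0] using hODE t ht0
    rw [eq_mul_exp_integral_of_hasDerivAt_mul ha hlin, hz0]
    positivity
  have hmono : MonotoneOn z (Iic 0) :=
    monotoneOn_of_hasDerivWithinAt_nonneg (convex_Iic 0) hzc
      (fun ξ hξ => (hODE ξ (interior_subset (s := Iic 0) hξ)).hasDerivWithinAt)
      (fun ξ hξ => mul_nonneg (hφpos _) (hpos ξ (interior_subset (s := Iic 0) hξ)).le)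
  exact ⟨hmono, fun ξ hξ => ⟨(hpos ξ hξ).le, hz0 ▸ hmono hξ self_mem_Iic hξ⟩⟩

/-- the profile z̄ is nondecreasing and stays in [0,1] on (−∞,0]. -/
theorem majda_profile_z_monotone_bounded
    (ω q : ℝ) (hω : ω ∈ Set.Ioc (0:ℝ) 1) (hq : 0 < q) (hqω : 2*q < ω)
    (φ : ℝ → ℝ) (hφ : Continuous φ) (hφpos : ∀ v, 0 ≤ φ v)
    (z : ℝ → ℝ)
    (hODE : ∀ ξ ≤ (0:ℝ),
      HasDerivAt z (φ (1 + Real.sqrt (1 - 2*q*(1 - z ξ)/ω)) * z ξ) ξ)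
    (hz0 : z 0 = 1) :
    MonotoneOn z (Set.Iic 0) ∧ ∀ ξ ≤ (0:ℝ), 0 ≤ z ξ ∧ z ξ ≤ 1 :=
  majda_profile_z_monotone_bounded_general ω q φ hφ hφpos z hODE hz0
end

section
/- For the Arrhenius ignition function with T(u) = u, the stability criterion ℰ T'(u)/T(u)² ≤ 2(u−1)/(u² − 2u + 2q/ω) for all u ∈ (1 + √(1 − 2q/ω), 2] holds if and only if ℰ ≤ 4ω/q. -/
/-!
Put `a = 2q/ω ∈ (0, 1)`. On the interval the denominator `u² - 2u + a = (u - 1)² - (1 - a)` is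
positive, so the criterion says `ℰ ≤ 2u²(u - 1)/(u² - 2u + a)` there. At `u = 2` the bound is `8/a`,
and it is smallest there: `a u²(u - 1) - 4(u² - 2u + a)` vanishes at `u = 2` and is nonnegative on
`[1, 2]` whenever `a ≤ 1`.
-/

open Set

lemma sq_sub_two_mul_add_pos {a u : ℝ} (hu : 1 + √(1 - a) < u) : 0 < u ^ 2 - 2 * u + a := by
  have : 1 - a < (u - 1) ^ 2 := Real.lt_sq_of_sqrt_lt (by linarith)
  nlinarith

lemma four_mul_sq_sub_two_mul_add_le {a u : ℝ} (ha : a ≤ 1) (hu₁ : 1 ≤ u) (hu₂ : u ≤ 2) :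
    4 * (u ^ 2 - 2 * u + a) ≤ a * u ^ 2 * (u - 1) := by
  have hfactor : a * u ^ 2 * (u - 1) - 4 * (u ^ 2 - 2 * u + a)
      = (2 - u) * (4 * u - a * (u ^ 2 + u + 2)) := by ring
  -- `u² + u + 2 ≤ 4u` on `[1, 2]`, and `a ≤ 1`
  have hquad : a * (u ^ 2 + u + 2) ≤ 4 * u := by
    by_cases ha₀ : 0 ≤ a
    · nlinarith [mul_le_mul_of_nonneg_right ha (by positivity : (0 : ℝ) ≤ u ^ 2 + u + 2)]
    · nlinarith [mul_neg_of_neg_of_pos (not_le.mp ha₀) (by positivity : (0 : ℝ) < u ^ 2 + u + 2)]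
  nlinarith [mul_nonneg (sub_nonneg.mpr hu₂) (sub_nonneg.mpr hquad)]

lemma stability_criterion_iff {a E : ℝ} (ha₀ : 0 < a) (ha₁ : a ≤ 1) :
    (∀ u ∈ Ioc (1 + √(1 - a)) 2, E / u ^ 2 ≤ 2 * (u - 1) / (u ^ 2 - 2 * u + a)) ↔ E ≤ 8 / a := by
  constructor
  · intro h
    have hsqrt : √(1 - a) < 1 := by
      rw [Real.sqrt_lt' one_pos]; linarith
    have h2 := h 2 ⟨by linarith, le_rfl⟩
    rw [le_div_iff₀ ha₀]
    rw [div_le_div_iff₀ (by norm_num) (by linarith)] at h2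
    linarith
  · rintro hE u ⟨hu₁, hu₂⟩
    have hD := sq_sub_two_mul_add_pos hu₁
    have hu : 1 ≤ u := by linarith [Real.sqrt_nonneg (1 - a)]
    rw [div_le_div_iff₀ (by positivity) hD]
    calc E * (u ^ 2 - 2 * u + a) ≤ 8 / a * (u ^ 2 - 2 * u + a) := by gcongr
      _ ≤ 8 / a * (a * u ^ 2 * (u - 1) / 4) := by
          gcongr; linarith [four_mul_sq_sub_two_mul_add_le ha₁ hu hu₂]
      _ = 2 * (u - 1) * u ^ 2 := by field_simp; ring

theorem arrhenius_linear_T_criterion_general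
    (ω q E : ℝ) (hω : ω ∈ Set.Ioc (0:ℝ) 1) (hq : 0 < q) (hqω : 2*q < ω) :
    (∀ u ∈ Set.Ioc (1 + Real.sqrt (1 - 2*q/ω)) 2,
        E * 1 / u^2 ≤ 2*(u - 1)/(u^2 - 2*u + 2*q/ω))
      ↔ E ≤ 4*ω/q := by
  have hω₀ : 0 < ω := hω.1
  have h8 : 8 / (2 * q / ω) = 4 * ω / q := by field_simp; ring
  simp only [mul_one]
  rw [← h8]
  exact stability_criterion_iff (by positivity) ((div_le_one hω₀).mpr (by linarith))

/-- for the Arrhenius ignition function with T(u) = u, the stability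
criterion holds if and only if ℰ ≤ 4ω/q. -/
theorem arrhenius_linear_T_criterion
    (ω q E : ℝ) (hω : ω ∈ Set.Ioc (0:ℝ) 1) (hq : 0 < q) (hqω : 2*q < ω)
    (hE : 0 < E) :
    (∀ u ∈ Set.Ioc (1 + Real.sqrt (1 - 2*q/ω)) 2,
        E * 1 / u^2 ≤ 2*(u - 1)/(u^2 - 2*u + 2*q/ω))
      ↔ E ≤ 4*ω/q :=
  arrhenius_linear_T_criterion_general ω q E hω hq hqω
end
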